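/- For every integer k ≥ 1, the function μ ↦ 2 cos(2μ) − μ sin(2μ) has exactly one zero in the open interval ((k−1)π/2, kπ/2); equivalently, there exists a unique ν_k ∈ ((k−1)π/2, kπ/2) satisfying the characteristic equation ν_k sin(2ν_k) = 2 cos(2ν_k) (i.e. ν_k = 2 cot(2ν_k)). Consequently the sequence (ν_k) is strictly increasing. -/

import Mathlib

/-!
At the endpoints `nπ/2` of the intervals the characteristic function `2 cos 2μ − μ sin 2μ` equals
`±2`, with opposite signs at the two ends, so each interval contains a zero. Inside an interval
`sin 2μ ≠ 0`, and the zeros are those of `2 cot 2μ − μ`, whose derivative `−4 / sin² 2μ − 1` is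
negative; hence the zero is unique. The roots lie in consecutive disjoint intervals, so they
increase.
-/

open Real Set

theorem exists_mem_Ioo_eq_zero_of_mul_neg {α : Type*} [ConditionallyCompleteLinearOrder α]
    [TopologicalSpace α] [OrderTopology α] [DenselyOrdered α] {f : α → ℝ} {a b : α}
    (hab : a ≤ b) (hf : ContinuousOn f (Icc a b)) (hsign : f a * f b < 0) :
    ∃ c ∈ Ioo a b, f c = 0 := by
  rcases mul_neg_iff.1 hsign with ⟨ha, hb⟩ | ⟨ha, hb⟩
  · exact intermediate_value_Ioo' hab hf ⟨hb, ha⟩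
  · exact intermediate_value_Ioo hab hf ⟨ha, hb⟩

theorem Real.sin_ne_zero_of_mem_Ioo_int_mul_pi {n : ℤ} {x : ℝ}
    (hx : x ∈ Ioo (n * π) ((n + 1) * π)) : sin x ≠ 0 := by
  intro h
  obtain ⟨m, rfl⟩ := sin_eq_zero_iff.1 h
  have hnm : (n : ℝ) < m := lt_of_mul_lt_mul_right hx.1 pi_pos.le
  have hmn : (m : ℝ) < n + 1 := lt_of_mul_lt_mul_right hx.2 pi_pos.le
  norm_cast at hnm hmn
  omega

noncomputable def neumannChar (μ : ℝ) : ℝ := 2 * cos (2 * μ) - μ * sin (2 * μ)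

@[fun_prop]
theorem continuous_neumannChar : Continuous neumannChar := by
  unfold neumannChar; fun_prop

theorem neumannChar_nat_mul_pi_div_two (n : ℕ) : neumannChar (n * π / 2) = 2 * (-1) ^ n := by
  rw [neumannChar, mul_div_cancel₀ _ two_ne_zero, cos_nat_mul_pi, sin_nat_mul_pi]
  ring

theorem exists_neumannChar_eq_zero (n : ℕ) :
    ∃ μ ∈ Ioo (n * π / 2) ((n + 1) * π / 2), neumannChar μ = 0 := by
  have hle : n * π / 2 ≤ (n + 1) * π / 2 := by gcongr; linarith
  have hsign : neumannChar (n * π / 2) * neumannChar ((n + 1) * π / 2) < 0 := by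
    have := neumannChar_nat_mul_pi_div_two (n + 1)
    push_cast at this
    have hsq : ((-1 : ℝ) ^ n) ^ 2 = 1 := by rw [← pow_mul, mul_comm, pow_mul, neg_one_sq, one_pow]
    rw [neumannChar_nat_mul_pi_div_two, this, pow_succ]
    linear_combination (-4) * hsq
  exact exists_mem_Ioo_eq_zero_of_mul_neg hle continuous_neumannChar.continuousOn hsign

theorem hasDerivAt_two_mul_cos_div_sin_sub {x : ℝ} (hx : sin (2 * x) ≠ 0) :
    HasDerivAt (fun μ => 2 * cos (2 * μ) / sin (2 * μ) - μ) (-4 / sin (2 * x) ^ 2 - 1) x := by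
  have hlin : HasDerivAt (fun μ : ℝ => 2 * μ) 2 x := by
    simpa using (hasDerivAt_id x).const_mul 2
  have hcos := ((hasDerivAt_cos (2 * x)).comp x hlin).const_mul 2
  have hsin := (hasDerivAt_sin (2 * x)).comp x hlin
  refine ((hcos.div hsin hx).sub (hasDerivAt_id x)).congr_deriv ?_
  simp only [Function.comp_apply]
  field_simp
  linear_combination (-4) * sin_sq_add_cos_sq (2 * x)

theorem strictAntiOn_two_mul_cos_div_sin_sub {s : Set ℝ} (hs : Convex ℝ s)
    (hsin : ∀ x ∈ s, sin (2 * x) ≠ 0) :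
    StrictAntiOn (fun μ => 2 * cos (2 * μ) / sin (2 * μ) - μ) s := by
  refine strictAntiOn_of_deriv_neg hs (fun x hx =>
    (hasDerivAt_two_mul_cos_div_sin_sub (hsin x hx)).continuousAt.continuousWithinAt) ?_
  intro x hx
  have hx' := hsin x (interior_subset hx)
  rw [(hasDerivAt_two_mul_cos_div_sin_sub hx').deriv]
  have hpos : 0 < 4 / sin (2 * x) ^ 2 := by positivity
  rw [neg_div]
  linarith

theorem neumannChar_eq_zero_iff {μ : ℝ} (h : sin (2 * μ) ≠ 0) :
    neumannChar μ = 0 ↔ 2 * cos (2 * μ) / sin (2 * μ) - μ = 0 := by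
  rw [neumannChar, div_sub' h, div_eq_zero_iff, or_iff_left h, mul_comm μ]

theorem existsUnique_neumannChar_eq_zero (n : ℕ) :
    ∃! μ, μ ∈ Ioo (n * π / 2) ((n + 1) * π / 2) ∧ neumannChar μ = 0 := by
  have hsin : ∀ μ ∈ Ioo (n * π / 2) ((n + 1) * π / 2), sin (2 * μ) ≠ 0 := fun μ hμ =>
    sin_ne_zero_of_mem_Ioo_int_mul_pi (n := n)
      ⟨by push_cast; linarith [hμ.1], by push_cast; linarith [hμ.2]⟩
  obtain ⟨μ, hμ, hμ0⟩ := exists_neumannChar_eq_zero n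
  refine ⟨μ, ⟨hμ, hμ0⟩, fun ν ⟨hν, hν0⟩ => ?_⟩
  refine (strictAntiOn_two_mul_cos_div_sin_sub (convex_Ioo _ _) hsin).injOn hν hμ ?_
  rw [(neumannChar_eq_zero_iff (hsin ν hν)).1 hν0, (neumannChar_eq_zero_iff (hsin μ hμ)).1 hμ0]

theorem strictMonoOn_of_mem_Ioo_mul {ν : ℕ → ℝ} {c : ℝ} (hc : 0 ≤ c)
    (hν : ∀ k : ℕ, 1 ≤ k → ν k ∈ Ioo ((k - 1) * c) (k * c)) : StrictMonoOn ν (Ici 1) := by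
  intro i hi j hj hij
  have hij' : (i : ℝ) ≤ j - 1 := by
    rw [le_sub_iff_add_le]; exact_mod_cast hij
  calc ν i < i * c := (hν i hi).2
    _ ≤ (j - 1) * c := by gcongr
    _ < ν j := (hν j hj).1

/-- For every integer `k ≥ 1`, the function `μ ↦ 2 cos(2μ) − μ sin(2μ)` has exactly one zero
in `((k−1)π/2, kπ/2)`; consequently any sequence of such roots is strictly increasing. -/
theorem neumann_char_unique_root :
    (∀ k : ℕ, 1 ≤ k → ∃! μ : ℝ, μ ∈ Ioo ((((k : ℝ)) - 1) * π / 2) (((k : ℝ)) * π / 2) ∧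
      2 * Real.cos (2 * μ) - μ * Real.sin (2 * μ) = 0) ∧
    (∀ ν : ℕ → ℝ,
      (∀ k : ℕ, 1 ≤ k → ν k ∈ Ioo ((((k : ℝ)) - 1) * π / 2) (((k : ℝ)) * π / 2) ∧
        ν k * Real.sin (2 * ν k) = 2 * Real.cos (2 * ν k)) →
      StrictMonoOn ν (Set.Ici 1)) := by
  refine ⟨fun k hk => ?_, fun ν hν => ?_⟩
  · obtain ⟨n, rfl⟩ := Nat.exists_eq_add_of_le' hk
    simpa [neumannChar] using existsUnique_neumannChar_eq_zero n
  · refine strictMonoOn_of_mem_Ioo_mul (half_pos pi_pos).le fun (k : ℕ) hk => ?_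
    simpa only [mul_div_assoc] using (hν k hk).1
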